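/- Let V ∈ ℝ^{2n×2r} satisfy V^T J_n V = J_r, U = J_r^{-1} V^T J_n, and suppose the full-order model has A = J_n R + (1/2) B J_m B^T J_n with R symmetric. Then the reduced drift A_r = U A V can be written as A_r = J_r R_r + (1/2) B_r J_m B_r^T J_r with R_r := V^T R V symmetric and B_r = U B; i.e., the reduced model admits the same PR-template parametrization with reduced Hamiltonian matrix R_r. -/
import Mathlib


open Matrix Kronecker

/-- Canonical symplectic matrix `J_k = I_k ⊗ [[0,1],[-1,0]]`. -/
def J (k : ℕ) : Matrix (Fin k × Fin 2) (Fin k × Fin 2) ℝ :=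
  (1 : Matrix (Fin k) (Fin k) ℝ) ⊗ₖ !![0, 1; -1, 0]

lemma Jsq (k : ℕ) : J k * J k = -1 := by
  rw [_root_.J, ← Matrix.mul_kronecker_mul, Matrix.one_mul]
  have h : (!![0, 1; -1, 0] : Matrix (Fin 2) (Fin 2) ℝ) * !![0, 1; -1, 0] = -1 := by
    ext i j; fin_cases i <;> fin_cases j <;> simp [Matrix.mul_fin_two, Matrix.one_apply]
  rw [h]
  ext ⟨i, a⟩ ⟨j, b⟩
  simp [Matrix.kroneckerMap_apply, Matrix.one_apply]
  split_ifs <;> simp_all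

lemma JT (k : ℕ) : (J k)ᵀ = -(J k) := by
  rw [_root_.J, ← Matrix.kroneckerMap_transpose]
  ext ⟨i, a⟩ ⟨j, b⟩
  fin_cases a <;> fin_cases b <;>
    simp [Matrix.kroneckerMap_apply, Matrix.one_apply, Matrix.transpose_apply,
      Matrix.vecHead, Matrix.vecTail]

lemma Jinv (k : ℕ) : (J k)⁻¹ = -(J k) := by
  apply Matrix.inv_eq_right_inv
  rw [Matrix.mul_neg, Jsq]; simp

theorem stmt18 (n m r : ℕ)
    (R : Matrix (Fin n × Fin 2) (Fin n × Fin 2) ℝ)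
    (B : Matrix (Fin n × Fin 2) (Fin m × Fin 2) ℝ)
    (hR : Rᵀ = R)
    (A : Matrix (Fin n × Fin 2) (Fin n × Fin 2) ℝ)
    (hA : A = J n * R + (1 / 2 : ℝ) • (B * J m * Bᵀ * J n))
    (V : Matrix (Fin n × Fin 2) (Fin r × Fin 2) ℝ)
    (hV : Vᵀ * J n * V = J r)
    (U : Matrix (Fin r × Fin 2) (Fin n × Fin 2) ℝ)
    (hU : U = (J r)⁻¹ * Vᵀ * J n) :
    (Vᵀ * R * V)ᵀ = Vᵀ * R * V ∧
    U * A * V = J r * (Vᵀ * R * V) +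
      (1 / 2 : ℝ) • ((U * B) * J m * (U * B)ᵀ * J r) := by
  constructor
  · rw [Matrix.transpose_mul, Matrix.transpose_mul, Matrix.transpose_transpose, hR,
      Matrix.mul_assoc]
  subst hA hU
  rw [Jinv]
  have h1 : (-(J r) * Vᵀ * J n) * (J n * R) * V = J r * (Vᵀ * R * V) := by
    have h : J n * (J n * R) = -R := by rw [← Matrix.mul_assoc, Jsq]; simp
    calc (-(J r) * Vᵀ * J n) * (J n * R) * V
        = -(J r * (Vᵀ * (J n * (J n * R)) * V)) := by simp [Matrix.mul_assoc]
      _ = J r * (Vᵀ * R * V) := by rw [h]; simp [Matrix.mul_assoc]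
  have h2 : (-(J r) * Vᵀ * J n) * (B * J m * Bᵀ * J n) * V
      = ((-(J r) * Vᵀ * J n) * B) * J m * ((-(J r) * Vᵀ * J n) * B)ᵀ * J r := by
    simp only [Matrix.transpose_mul, Matrix.transpose_neg, Matrix.transpose_transpose, JT]
    simp only [Matrix.mul_assoc, Matrix.neg_mul, Matrix.mul_neg, neg_neg, Jsq]
    simp [Matrix.mul_assoc]
  rw [Matrix.mul_add, Matrix.mul_smul, Matrix.add_mul, Matrix.smul_mul, h1, h2]
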